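/- Let K₁, K₂ be compact operators on a Hilbert space and θ > 0. Then limsup_{λ→0} λ^θ n(λ, K₁+K₂) raised to the power 1/(1+θ) is at most (limsup_{λ→0} λ^θ n(λ,K₁))^{1/(1+θ)} + (limsup_{λ→0} λ^θ n(λ,K₂))^{1/(1+θ)}. -/

import Mathlib

open Filter Topology ENNReal

variable {H : Type*} [NormedAddCommGroup H] [InnerProductSpace ℂ H] [CompleteSpace H]

/-- The `n`-th approximation number of a bounded operator `K`: the distance from
`K` to the operators of rank at most `n`.  For a compact operator this equals the
`(n+1)`-st singular value `s_{n+1}(K)`. -/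
noncomputable def approxNum (K : H →L[ℂ] H) (n : ℕ) : ℝ :=
  sInf {c : ℝ | ∃ F : H →L[ℂ] H, LinearMap.rank (F : H →ₗ[ℂ] H) ≤ (n : Cardinal) ∧ c = ‖K - F‖}

/-- The singular value counting function `n(λ, K)`: the number of singular values
of `K` exceeding `λ`. -/
noncomputable def svCount (K : H →L[ℂ] H) (lam : ℝ) : ℕ :=
  sInf {n : ℕ | approxNum K n ≤ lam}

lemma approxSet_nonempty (K : H →L[ℂ] H) (n : ℕ) :
    {c : ℝ | ∃ F : H →L[ℂ] H, LinearMap.rank (F : H →ₗ[ℂ] H) ≤ (n : Cardinal) ∧ c = ‖K - F‖}.Nonempty :=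
  ⟨‖K - 0‖, 0, by simp, rfl⟩

lemma approxSet_bddBelow (K : H →L[ℂ] H) (n : ℕ) :
    BddBelow {c : ℝ | ∃ F : H →L[ℂ] H, LinearMap.rank (F : H →ₗ[ℂ] H) ≤ (n : Cardinal) ∧ c = ‖K - F‖} :=
  ⟨0, by rintro c ⟨F, -, rfl⟩; positivity⟩

lemma approxNum_le (K F : H →L[ℂ] H) (n : ℕ)
    (h : LinearMap.rank (F : H →ₗ[ℂ] H) ≤ (n : Cardinal)) : approxNum K n ≤ ‖K - F‖ :=
  csInf_le (approxSet_bddBelow K n) ⟨F, h, rfl⟩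

lemma approxNum_add (K₁ K₂ : H →L[ℂ] H) (m n : ℕ) :
    approxNum (K₁ + K₂) (m + n) ≤ approxNum K₁ m + approxNum K₂ n := by
  refine le_of_forall_pos_le_add fun ε hε => ?_
  obtain ⟨c₁, ⟨F₁, hF₁, rfl⟩, hlt₁⟩ := Real.lt_sInf_add_pos (approxSet_nonempty K₁ m) (half_pos hε)
  obtain ⟨c₂, ⟨F₂, hF₂, rfl⟩, hlt₂⟩ := Real.lt_sInf_add_pos (approxSet_nonempty K₂ n) (half_pos hε)
  have hrank : LinearMap.rank ((F₁ + F₂ : H →L[ℂ] H) : H →ₗ[ℂ] H) ≤ ((m + n : ℕ) : Cardinal) := by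
    rw [ContinuousLinearMap.coe_add, Nat.cast_add]
    exact (LinearMap.rank_add_le _ _).trans (add_le_add hF₁ hF₂)
  have h1 : approxNum (K₁ + K₂) (m + n) ≤ ‖K₁ - F₁‖ + ‖K₂ - F₂‖ := by
    refine (approxNum_le _ _ _ hrank).trans ?_
    have : K₁ + K₂ - (F₁ + F₂) = (K₁ - F₁) + (K₂ - F₂) := by abel
    rw [this]; exact norm_add_le _ _
  have := add_lt_add hlt₁ hlt₂
  rw [add_add_add_comm, add_halves] at this
  exact h1.trans (le_of_lt this)

lemma exists_approxNum_le (K : H →L[ℂ] H) (hK : IsCompactOperator K) {ε : ℝ} (hε : 0 < ε) :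
    ∃ n, approxNum K n ≤ ε := by
  have hcpt : IsCompact (closure (K '' Metric.closedBall 0 1)) :=
    IsCompactOperator.isCompact_closure_image_closedBall (𝕜₁ := ℂ)
      (f := (K : H →ₗ[ℂ] H)) hK 1
  have htb : TotallyBounded (K '' Metric.closedBall 0 1) :=
    (hcpt.totallyBounded).subset subset_closure
  obtain ⟨t, htfin, hcov⟩ := (Metric.totallyBounded_iff).1 htb ε hε
  set S : Submodule ℂ H := Submodule.span ℂ t with hS
  have : FiniteDimensional ℂ S := FiniteDimensional.span_of_finite ℂ htfin
  set P : H →L[ℂ] H := S.subtypeL.comp (S.orthogonalProjectionOnto) with hP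
  have hPmem : ∀ x, P x ∈ S := fun x => (S.orthogonalProjectionOnto x).2
  have hPdist : ∀ x, ∀ v ∈ S, ‖x - P x‖ ≤ ‖x - v‖ := by
    intro x v hv
    rw [hP]
    have := Submodule.starProjection_minimal (U := S) x
    rw [Submodule.starProjection_apply] at this
    simp only [ContinuousLinearMap.comp_apply, Submodule.subtypeL_apply]
    have hbdd : BddBelow (Set.range fun w : S => ‖x - (w : H)‖) :=
      ⟨0, by rintro r ⟨w, rfl⟩; positivity⟩
    exact this ▸ ciInf_le hbdd (⟨v, hv⟩ : S)
  set F : H →L[ℂ] H := P.comp K with hF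
  refine ⟨Module.finrank ℂ S, ?_⟩
  have hrank : LinearMap.rank ((F : H →L[ℂ] H) : H →ₗ[ℂ] H) ≤ ((Module.finrank ℂ S : ℕ) : Cardinal) := by
    rw [Module.finrank_eq_rank]
    have hrange : LinearMap.range ((F : H →L[ℂ] H) : H →ₗ[ℂ] H) ≤ S := by
      rintro y ⟨x, rfl⟩; exact hPmem (K x)
    exact Submodule.rank_mono hrange
  refine (approxNum_le _ _ _ hrank).trans ?_
  refine ContinuousLinearMap.opNorm_le_bound _ hε.le fun x => ?_
  rcases eq_or_ne x 0 with rfl | hx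
  · simp
  · have hxpos : (0:ℝ) < ‖x‖ := norm_pos_iff.2 hx
    set u : H := ((‖x‖ : ℂ))⁻¹ • x with hu
    have hunorm : ‖u‖ ≤ 1 := by
      rw [hu, norm_smul, norm_inv, Complex.norm_real, norm_norm, inv_mul_cancel₀ hxpos.ne']
    have hmem : K u ∈ K '' Metric.closedBall 0 1 :=
      ⟨u, by simpa [Metric.mem_closedBall] using hunorm, rfl⟩
    obtain ⟨y, hy, hyd⟩ := Set.mem_iUnion₂.1 (hcov hmem)
    have hyS : y ∈ S := Submodule.subset_span hy
    have hKu : ‖K u - F u‖ ≤ ε := by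
      have : ‖K u - P (K u)‖ ≤ ‖K u - y‖ := hPdist (K u) y hyS
      have hyd' : ‖K u - y‖ < ε := by rwa [Metric.mem_ball, dist_eq_norm] at hyd
      calc ‖K u - F u‖ = ‖K u - P (K u)‖ := rfl
        _ ≤ ‖K u - y‖ := this
        _ ≤ ε := hyd'.le
    have hscale : (K - F) x = (‖x‖ : ℂ) • ((K - F) u) := by
      rw [hu, map_smul, smul_smul, mul_inv_cancel₀, one_smul]
      exact_mod_cast hxpos.ne'
    calc ‖(K - F) x‖ = ‖x‖ * ‖(K - F) u‖ := by
          rw [hscale, norm_smul, Complex.norm_real, norm_norm]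
      _ ≤ ‖x‖ * ε := by
          refine mul_le_mul_of_nonneg_left ?_ hxpos.le
          simpa using hKu
      _ = ε * ‖x‖ := mul_comm _ _

lemma approxNum_svCount_le (K : H →L[ℂ] H) (hK : IsCompactOperator K) {lam : ℝ}
    (hlam : 0 < lam) : approxNum K (svCount K lam) ≤ lam :=
  Nat.sInf_mem (exists_approxNum_le K hK hlam)

lemma svCount_add_le (K₁ K₂ : H →L[ℂ] H) (hK₁ : IsCompactOperator K₁)
    (hK₂ : IsCompactOperator K₂) {l₁ l₂ : ℝ} (h₁ : 0 < l₁) (h₂ : 0 < l₂) :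
    svCount (K₁ + K₂) (l₁ + l₂) ≤ svCount K₁ l₁ + svCount K₂ l₂ :=
  Nat.sInf_le <| (approxNum_add K₁ K₂ _ _).trans
    (add_le_add (approxNum_svCount_le K₁ hK₁ h₁) (approxNum_svCount_le K₂ hK₂ h₂))

lemma ennreal_limsup_add_le {α : Type*} {f : Filter α} (u v : α → ℝ≥0∞) :
    limsup (fun x => u x + v x) f ≤ limsup u f + limsup v f := by
  by_cases hu : limsup u f = ⊤
  · rw [hu, top_add]; exact le_top
  by_cases hv : limsup v f = ⊤
  · rw [hv, add_top]; exact le_top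
  refine ENNReal.le_of_forall_pos_le_add fun ε hε _ => ?_
  have hεhalf : ((ε : ℝ≥0∞) / 2) ≠ 0 := by
    simp [ENNReal.div_eq_zero_iff, hε.ne']
  have hu2 : limsup u f < limsup u f + ε / 2 := ENNReal.lt_add_right hu hεhalf
  have hv2 : limsup v f < limsup v f + ε / 2 := ENNReal.lt_add_right hv hεhalf
  have h1 := Filter.eventually_lt_of_limsup_lt hu2
  have h2 := Filter.eventually_lt_of_limsup_lt hv2
  have hle : limsup (fun x => u x + v x) f ≤ (limsup u f + ε / 2) + (limsup v f + ε / 2) :=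
    limsup_le_of_le (by isBoundedDefault)
      ((h1.and h2).mono fun x hx => add_le_add hx.1.le hx.2.le)
  refine hle.trans (le_of_eq ?_)
  rw [add_add_add_comm, ENNReal.add_halves]

lemma limsup_scale_le (g : ℝ → ℝ≥0∞) {t : ℝ} (ht : 0 < t) :
    limsup (fun lam => g (t * lam)) (𝓝[>] (0 : ℝ)) ≤ limsup g (𝓝[>] (0 : ℝ)) := by
  have hmap : Tendsto (fun lam : ℝ => t * lam) (𝓝[>] 0) (𝓝[>] 0) := by
    apply tendsto_nhdsWithin_of_tendsto_nhds_of_eventually_within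
    · have : Tendsto (fun lam : ℝ => t * lam) (𝓝 0) (𝓝 (t * 0)) :=
        (continuous_const.mul continuous_id).tendsto 0
      simpa using this.mono_left nhdsWithin_le_nhds
    · filter_upwards [self_mem_nhdsWithin] with x hx
      exact mul_pos ht hx
  have : limsup (g ∘ fun lam : ℝ => t * lam) (𝓝[>] (0:ℝ)) =
      limsup g (map (fun lam : ℝ => t * lam) (𝓝[>] (0:ℝ))) := limsup_comp g _ _
  rw [show (fun lam => g (t * lam)) = g ∘ (fun lam : ℝ => t * lam) from rfl, this]
  exact limsup_le_limsup_of_le hmap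

lemma key_ineq (K₁ K₂ : H →L[ℂ] H) (hK₁ : IsCompactOperator K₁) (hK₂ : IsCompactOperator K₂)
    (θ : ℝ) (hθ : 0 < θ) {t : ℝ} (ht0 : 0 < t) (ht1 : t < 1) :
    limsup (fun lam : ℝ => ENNReal.ofReal (lam ^ θ) * (svCount (K₁ + K₂) lam : ℝ≥0∞))
        (𝓝[>] (0 : ℝ)) ≤
      ENNReal.ofReal (t ^ (-θ)) *
        limsup (fun lam : ℝ => ENNReal.ofReal (lam ^ θ) * (svCount K₁ lam : ℝ≥0∞))
          (𝓝[>] (0 : ℝ)) +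
      ENNReal.ofReal ((1 - t) ^ (-θ)) *
        limsup (fun lam : ℝ => ENNReal.ofReal (lam ^ θ) * (svCount K₂ lam : ℝ≥0∞))
          (𝓝[>] (0 : ℝ)) := by
  have h1t : 0 < 1 - t := by linarith
  set g₁ : ℝ → ℝ≥0∞ := fun lam => ENNReal.ofReal (lam ^ θ) * (svCount K₁ lam : ℝ≥0∞) with hg₁
  set g₂ : ℝ → ℝ≥0∞ := fun lam => ENNReal.ofReal (lam ^ θ) * (svCount K₂ lam : ℝ≥0∞) with hg₂
  have hsplit : ∀ {s : ℝ}, 0 < s → ∀ {lam : ℝ}, 0 < lam →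
      ENNReal.ofReal (lam ^ θ) = ENNReal.ofReal (s ^ (-θ)) * ENNReal.ofReal ((s * lam) ^ θ) := by
    intro s hs lam hlam
    rw [← ENNReal.ofReal_mul (Real.rpow_nonneg hs.le _)]
    congr 1
    rw [Real.mul_rpow hs.le hlam.le, Real.rpow_neg hs.le, ← mul_assoc,
      inv_mul_cancel₀ (Real.rpow_pos_of_pos hs θ).ne', one_mul]
  have hpt : ∀ᶠ lam in 𝓝[>] (0 : ℝ),
      ENNReal.ofReal (lam ^ θ) * (svCount (K₁ + K₂) lam : ℝ≥0∞) ≤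
        ENNReal.ofReal (t ^ (-θ)) * g₁ (t * lam) +
          ENNReal.ofReal ((1 - t) ^ (-θ)) * g₂ ((1 - t) * lam) := by
    filter_upwards [self_mem_nhdsWithin] with lam hlam
    replace hlam : (0 : ℝ) < lam := hlam
    have hc : (svCount (K₁ + K₂) lam : ℝ≥0∞) ≤
        (svCount K₁ (t * lam) : ℝ≥0∞) + (svCount K₂ ((1 - t) * lam) : ℝ≥0∞) := by
      have h := svCount_add_le K₁ K₂ hK₁ hK₂ (mul_pos ht0 hlam) (mul_pos h1t hlam)
      rw [show t * lam + (1 - t) * lam = lam by ring] at h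
      exact_mod_cast h
    calc ENNReal.ofReal (lam ^ θ) * (svCount (K₁ + K₂) lam : ℝ≥0∞)
        ≤ ENNReal.ofReal (lam ^ θ) *
            ((svCount K₁ (t * lam) : ℝ≥0∞) + (svCount K₂ ((1 - t) * lam) : ℝ≥0∞)) :=
          mul_le_mul_right hc _
      _ = ENNReal.ofReal (lam ^ θ) * (svCount K₁ (t * lam) : ℝ≥0∞) +
            ENNReal.ofReal (lam ^ θ) * (svCount K₂ ((1 - t) * lam) : ℝ≥0∞) := mul_add _ _ _
      _ = ENNReal.ofReal (t ^ (-θ)) * g₁ (t * lam) +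
            ENNReal.ofReal ((1 - t) ^ (-θ)) * g₂ ((1 - t) * lam) := by
          have e₁ : ENNReal.ofReal (lam ^ θ) * (svCount K₁ (t * lam) : ℝ≥0∞) =
              ENNReal.ofReal (t ^ (-θ)) * g₁ (t * lam) := by
            rw [show g₁ (t * lam) = ENNReal.ofReal ((t * lam) ^ θ) * (svCount K₁ (t * lam) : ℝ≥0∞)
              from rfl, hsplit ht0 hlam, mul_assoc]
          have e₂ : ENNReal.ofReal (lam ^ θ) * (svCount K₂ ((1 - t) * lam) : ℝ≥0∞) =
              ENNReal.ofReal ((1 - t) ^ (-θ)) * g₂ ((1 - t) * lam) := by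
            rw [show g₂ ((1 - t) * lam) =
              ENNReal.ofReal (((1 - t) * lam) ^ θ) * (svCount K₂ ((1 - t) * lam) : ℝ≥0∞)
              from rfl, hsplit h1t hlam, mul_assoc]
          rw [e₁, e₂]
  refine (limsup_le_limsup hpt).trans ?_
  refine (ennreal_limsup_add_le _ _).trans (add_le_add ?_ ?_)
  · rw [ENNReal.limsup_const_mul_of_ne_top ENNReal.ofReal_ne_top]
    exact mul_le_mul_right (limsup_scale_le g₁ ht0) _
  · rw [ENNReal.limsup_const_mul_of_ne_top ENNReal.ofReal_ne_top]
    exact mul_le_mul_right (limsup_scale_le g₂ h1t) _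


set_option maxHeartbeats 1000000 in
/-- Subadditivity of the `θ`-asymptotic functional of the singular value counting
function: `(limsup λ^θ n(λ,K₁+K₂))^{1/(1+θ)} ≤ (limsup λ^θ n(λ,K₁))^{1/(1+θ)}
+ (limsup λ^θ n(λ,K₂))^{1/(1+θ)}` (limsups as `λ → 0⁺`). -/
theorem limsup_counting_subadditive (K₁ K₂ : H →L[ℂ] H)
    (hK₁ : IsCompactOperator K₁) (hK₂ : IsCompactOperator K₂)
    (θ : ℝ) (hθ : 0 < θ) :
    (limsup (fun lam : ℝ => ENNReal.ofReal (lam ^ θ) * (svCount (K₁ + K₂) lam : ℝ≥0∞))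
        (𝓝[>] (0 : ℝ))) ^ (1 / (1 + θ)) ≤
      (limsup (fun lam : ℝ => ENNReal.ofReal (lam ^ θ) * (svCount K₁ lam : ℝ≥0∞))
        (𝓝[>] (0 : ℝ))) ^ (1 / (1 + θ)) +
      (limsup (fun lam : ℝ => ENNReal.ofReal (lam ^ θ) * (svCount K₂ lam : ℝ≥0∞))
        (𝓝[>] (0 : ℝ))) ^ (1 / (1 + θ)) := by
  set A := limsup (fun lam : ℝ => ENNReal.ofReal (lam ^ θ) * (svCount K₁ lam : ℝ≥0∞))
    (𝓝[>] (0 : ℝ)) with hA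
  set B := limsup (fun lam : ℝ => ENNReal.ofReal (lam ^ θ) * (svCount K₂ lam : ℝ≥0∞))
    (𝓝[>] (0 : ℝ)) with hB
  set L := limsup (fun lam : ℝ => ENNReal.ofReal (lam ^ θ) * (svCount (K₁ + K₂) lam : ℝ≥0∞))
    (𝓝[>] (0 : ℝ)) with hLdef
  have h1θ : (0:ℝ) < 1 + θ := by linarith
  have hexp : (0:ℝ) < 1 / (1 + θ) := by positivity
  by_cases hAtop : A = ⊤
  · rw [hAtop, ENNReal.top_rpow_of_pos hexp, top_add]; exact le_top
  by_cases hBtop : B = ⊤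
  · rw [hBtop, ENNReal.top_rpow_of_pos hexp, add_top]; exact le_top
  set a := (A ^ (1/(1+θ))).toReal with ha
  set b := (B ^ (1/(1+θ))).toReal with hb
  have hAne : A ^ (1/(1+θ)) ≠ ⊤ := ENNReal.rpow_ne_top_of_nonneg hexp.le hAtop
  have hBne : B ^ (1/(1+θ)) ≠ ⊤ := ENNReal.rpow_ne_top_of_nonneg hexp.le hBtop
  have haA : ENNReal.ofReal a = A ^ (1/(1+θ)) := ENNReal.ofReal_toReal hAne
  have hbB : ENNReal.ofReal b = B ^ (1/(1+θ)) := ENNReal.ofReal_toReal hBne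
  have ha0 : 0 ≤ a := ENNReal.toReal_nonneg
  have hb0 : 0 ≤ b := ENNReal.toReal_nonneg
  have hApow : A = ENNReal.ofReal (a ^ (1+θ)) := by
    rw [← ENNReal.ofReal_rpow_of_nonneg ha0 h1θ.le, haA, ← ENNReal.rpow_mul,
      one_div_mul_cancel h1θ.ne', ENNReal.rpow_one]
  have hBpow : B = ENNReal.ofReal (b ^ (1+θ)) := by
    rw [← ENNReal.ofReal_rpow_of_nonneg hb0 h1θ.le, hbB, ← ENNReal.rpow_mul,
      one_div_mul_cancel h1θ.ne', ENNReal.rpow_one]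
  have hmain : ∀ s : ℝ, 0 < s → L ≤ ENNReal.ofReal ((a + b + 2*s) ^ (1+θ)) := by
    intro s hs
    set T := a + b + 2*s with hT
    have hTpos : 0 < T := by rw [hT]; linarith
    have has : 0 < a + s := by linarith
    have hbs : 0 < b + s := by linarith
    set t := (a+s)/T with ht
    have ht0 : 0 < t := div_pos has hTpos
    have ht1 : t < 1 := by rw [ht, div_lt_one hTpos]; linarith
    have h1t : 1 - t = (b+s)/T := by
      rw [ht, hT]; field_simp; ring
    have key := key_ineq K₁ K₂ hK₁ hK₂ θ hθ ht0 ht1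
    have hterm : ∀ (c : ℝ), 0 < c → (c/T)^(-θ) * c^(1+θ) = T^θ * c := by
      intro c hc
      rw [Real.rpow_neg (by positivity), ← Real.inv_rpow (by positivity), inv_div,
        Real.div_rpow hTpos.le hc.le, Real.rpow_add hc, Real.rpow_one]
      field_simp
    have h₁ : ENNReal.ofReal (t^(-θ)) * A ≤ ENNReal.ofReal (T^θ * (a+s)) := by
      rw [hApow, ← ENNReal.ofReal_mul (Real.rpow_nonneg ht0.le _)]
      apply ENNReal.ofReal_le_ofReal
      calc t^(-θ) * a^(1+θ) ≤ t^(-θ) * (a+s)^(1+θ) :=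
            mul_le_mul_of_nonneg_left
              (Real.rpow_le_rpow ha0 (by linarith) h1θ.le) (Real.rpow_nonneg ht0.le _)
        _ = T^θ * (a+s) := by rw [ht]; exact hterm _ has
    have h₂ : ENNReal.ofReal ((1-t)^(-θ)) * B ≤ ENNReal.ofReal (T^θ * (b+s)) := by
      rw [hBpow, ← ENNReal.ofReal_mul (Real.rpow_nonneg (by linarith : (0:ℝ) ≤ 1 - t) _)]
      apply ENNReal.ofReal_le_ofReal
      calc (1-t)^(-θ) * b^(1+θ) ≤ (1-t)^(-θ) * (b+s)^(1+θ) :=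
            mul_le_mul_of_nonneg_left
              (Real.rpow_le_rpow hb0 (by linarith) h1θ.le)
              (Real.rpow_nonneg (by linarith) _)
        _ = T^θ * (b+s) := by rw [h1t]; exact hterm _ hbs
    have hsum : ENNReal.ofReal (T^θ*(a+s)) + ENNReal.ofReal (T^θ*(b+s)) =
        ENNReal.ofReal (T^(1+θ)) := by
      rw [← ENNReal.ofReal_add (by positivity) (by positivity)]
      congr 1
      rw [Real.rpow_add hTpos, Real.rpow_one, hT]
      ring
    exact key.trans ((add_le_add h₁ h₂).trans_eq hsum)
  have hfin : L ^ (1/(1+θ)) ≤ ENNReal.ofReal (a + b) := by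
    refine ENNReal.le_of_forall_pos_le_add fun ε hε _ => ?_
    have hε' : (0:ℝ) < (ε:ℝ)/2 := by positivity
    calc L ^ (1/(1+θ)) ≤ (ENNReal.ofReal ((a+b+(ε:ℝ))^(1+θ)))^(1/(1+θ)) := by
          have h := hmain ((ε:ℝ)/2) hε'
          rw [show a + b + 2*((ε:ℝ)/2) = a + b + (ε:ℝ) by ring] at h
          exact ENNReal.rpow_le_rpow h hexp.le
      _ = ENNReal.ofReal (a+b+(ε:ℝ)) := by
          rw [ENNReal.ofReal_rpow_of_nonneg (by positivity) hexp.le,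
            ← Real.rpow_mul (by positivity), mul_one_div_cancel h1θ.ne', Real.rpow_one]
      _ ≤ ENNReal.ofReal (a+b) + ↑ε := by
          rw [ENNReal.ofReal_add (add_nonneg ha0 hb0) (by positivity),
            ENNReal.ofReal_coe_nnreal]
  rw [← haA, ← hbB, ← ENNReal.ofReal_add ha0 hb0]
  exact hfin
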